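/- Let k be a non-negative integer, P a finite propositional logic program, and U a model of the theory T₀(P) with |M(U)| ≤ k. Then M(U) is a stable model of P. -/

import Mathlib

/-!
Read `c(q,j)` as "`q` is derived in round `j`" and let stage `j` consist of the atoms
derived in rounds `1, …, j`. Given `F₁`, the formulas `F₃, F₄` say that stage `j + 1` is
stage `j` together with the heads of the rules whose positive body lies in stage `j` and
whose negative body misses `M(U)`, and `F₂` says that `M(U)` is stage `k + 1`. So the stages
are the iterates of the immediate-consequence operator of the reduct `P^{M(U)}`, whence
`M(U) ⊆ LM(P^{M(U)})`. Once two consecutive stages agree, all later ones do; as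
`|M(U)| ≤ k`, the chain `∅ = stage 0 ⊆ ⋯ ⊆ stage (k + 1) = M(U)` cannot grow `k + 1`
times, so stage `k` is already `M(U)`. Hence `M(U)` is closed under the rules of `P^{M(U)}` and
contains its least model.
-/

open scoped Classical

noncomputable section

/-- A propositional logic program rule: a head atom, a finite positive body and a
finite negative body. -/
structure LPRule (α : Type) where
  head : α
  pos : Finset α
  neg : Finset α
deriving DecidableEq

/-- A logic program is a finite set of rules. -/
abbrev LProgram (α : Type) := Finset (LPRule α)

variable {α : Type} [DecidableEq α]

/-- `horn r`: the Horn rule with the same head and positive body as `r`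
and empty negative body. -/
def LPRule.horn (r : LPRule α) : LPRule α := ⟨r.head, r.pos, ∅⟩

/-- A rule `r` is proper if `h(r) ∉ b⁺(r)` and `b⁺(r) ∩ b⁻(r) = ∅`. -/
def LPRule.proper (r : LPRule α) : Prop := r.head ∉ r.pos ∧ r.pos ∩ r.neg = ∅

/-- `At(P)`: the set of atoms occurring in `P`. -/
def atomsP (P : LProgram α) : Finset α := P.sup (fun r => insert r.head (r.pos ∪ r.neg))

/-- `h(P)`: the set of heads of rules of `P`. -/
def headsP (P : LProgram α) : Finset α := P.image LPRule.head

/-- `Neg(P)`: the set of atoms occurring negated in `P`. -/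
def negP (P : LProgram α) : Finset α := P.sup LPRule.neg

/-- The least model of a (Horn) program `Q`, given as a set of rules (negative bodies
are ignored; Horn rules have empty negative bodies): the least set `M` of atoms such
that `h(r) ∈ M` whenever `r ∈ Q` and `b⁺(r) ⊆ M`. -/
def LM (Q : Set (LPRule α)) : Set α :=
  ⋂₀ {M : Set α | ∀ r ∈ Q, (↑r.pos : Set α) ⊆ M → r.head ∈ M}

/-- The reduct `P^S`: delete every rule whose negative body meets `S` and remove the
negative bodies of the remaining rules. -/
def reduct (P : LProgram α) (S : Set α) : Set (LPRule α) :=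
  LPRule.horn '' {r | r ∈ P ∧ (↑r.neg : Set α) ∩ S = ∅}

/-- `M` is a stable model of `P` if `M = LM (P^M)`. -/
def isStable (P : LProgram α) (M : Set α) : Prop :=
  M = LM (reduct P M)

/-- The propositional atoms of the encoding `T(P)`: for each program atom `q`,
atoms `c(q)`, `c(q,i)`, `c⁻(q,i)` and `d(q,i)`. -/
inductive EncAtom (α : Type) where
  | c : α → EncAtom α
  | ci : α → ℕ → EncAtom α
  | cm : α → ℕ → EncAtom α
  | d : α → ℕ → EncAtom α
deriving DecidableEq

/-- `U` satisfies `F₁(q,i) = c⁻(q,i) ↔ (c(q,1) ∨ … ∨ c(q,i-1))`. -/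
def SatF1 (U : Set (EncAtom α)) (q : α) (i : ℕ) : Prop :=
  EncAtom.cm q i ∈ U ↔ ∃ j, 1 ≤ j ∧ j ≤ i - 1 ∧ EncAtom.ci q j ∈ U

/-- `U` satisfies `F₂(q) = c(q) ↔ (c(q,1) ∨ … ∨ c(q,k+1))`. -/
def SatF2 (k : ℕ) (U : Set (EncAtom α)) (q : α) : Prop :=
  EncAtom.c q ∈ U ↔ ∃ j, 1 ≤ j ∧ j ≤ k + 1 ∧ EncAtom.ci q j ∈ U

/-- `U` satisfies `F₃(r,i)`; for `i ≥ 2` this is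
`c⁻(a₁,i) ∧ … ∧ c⁻(a_s,i) ∧ ¬c(b₁) ∧ … ∧ ¬c(b_t) ∧ ¬c⁻(q,i)`, for `i = 1` it is
`false` when `b⁺(r) ≠ ∅` and `¬c(b₁) ∧ … ∧ ¬c(b_t)` when `b⁺(r) = ∅`. -/
def SatF3 (U : Set (EncAtom α)) (r : LPRule α) (i : ℕ) : Prop :=
  if i = 1 then r.pos = ∅ ∧ ∀ b ∈ r.neg, EncAtom.c b ∉ U
  else (∀ a ∈ r.pos, EncAtom.cm a i ∈ U) ∧ (∀ b ∈ r.neg, EncAtom.c b ∉ U) ∧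
    EncAtom.cm r.head i ∉ U

/-- `U` satisfies `F₄(q,i) = c(q,i) ↔ (F₃(r₁,i) ∨ … ∨ F₃(r_v,i))`, where
`r₁,…,r_v` are all rules of `P` with head `q`. -/
def SatF4 (P : LProgram α) (U : Set (EncAtom α)) (q : α) (i : ℕ) : Prop :=
  EncAtom.ci q i ∈ U ↔ ∃ r ∈ P, r.head = q ∧ SatF3 U r i

/-- `U` is a model of the theory `T₀(P)`. -/
def ModelT0 (k : ℕ) (P : LProgram α) (U : Set (EncAtom α)) : Prop :=
  (∀ q ∈ atomsP P, ∀ i, 2 ≤ i → i ≤ k + 1 → SatF1 U q i) ∧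
  (∀ q ∈ atomsP P, SatF2 k U q) ∧
  (∀ q ∈ atomsP P, ∀ i, 1 ≤ i → i ≤ k + 1 → SatF4 P U q i)

/-- `M(U) = {q ∈ At(P) : c(q) ∈ U}`. -/
def MU (P : LProgram α) (U : Set (EncAtom α)) : Finset α :=
  (atomsP P).filter (fun q => EncAtom.c q ∈ U)

section Chains

variable {β : Type*} {k : ℕ}

theorem eq_succ_of_eq_succ_of_le {s : ℕ → β}
    (hstep : ∀ n, n + 1 ≤ k → s n = s (n + 1) → s (n + 1) = s (n + 2))
    {j : ℕ} (hjk : j ≤ k) (hj : s j = s (j + 1)) : s k = s (k + 1) := by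
  have hrepeat : ∀ n, j ≤ n → n ≤ k → s n = s (n + 1) := by
    intro n hjn
    induction n, hjn using Nat.le_induction with
    | base => exact fun _ => hj
    | succ n _ ih => exact fun hn => hstep n hn (ih (by omega))
  exact hrepeat k hjk le_rfl

theorem exists_eq_succ_of_card_le {s : ℕ → Finset β} (hs : Monotone s)
    (hk : (s (k + 1)).card ≤ k) : ∃ j ≤ k, s j = s (j + 1) := by
  by_contra! hstrict
  have hgrow : ∀ n ≤ k + 1, n ≤ (s n).card := by
    intro n
    induction n with
    | zero => exact fun _ => Nat.zero_le _
    | succ n ih =>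
      intro hn
      have hlt : (s n).card < (s (n + 1)).card :=
        Finset.card_lt_card ((hs n.le_succ).ssubset_of_ne (hstrict n (by omega)))
      have := ih (by omega)
      omega
  have := hgrow (k + 1) le_rfl
  omega

end Chains

section Horn

variable {β : Type} {Q : Set (LPRule β)}

theorem LM_subset_of_closed {S : Set β}
    (hS : ∀ r ∈ Q, (↑r.pos : Set β) ⊆ S → r.head ∈ S) : LM Q ⊆ S :=
  Set.sInter_subset_of_mem hS

theorem head_mem_LM {r : LPRule β} (hr : r ∈ Q) (hpos : (↑r.pos : Set β) ⊆ LM Q) :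
    r.head ∈ LM Q :=
  Set.mem_sInter.2 fun _ hS => hS r hr (hpos.trans (LM_subset_of_closed hS))

theorem horn_mem_reduct {P : LProgram β} {S : Set β} {r : LPRule β} (hr : r ∈ P)
    (hneg : ∀ b ∈ r.neg, b ∉ S) : r.horn ∈ reduct P S :=
  ⟨r, ⟨hr, Set.eq_empty_of_forall_notMem fun b hb => hneg b hb.1 hb.2⟩, rfl⟩

end Horn

lemma mem_atomsP_head {P : LProgram α} {r : LPRule α} (hr : r ∈ P) :
    r.head ∈ atomsP P :=
  Finset.mem_sup.2 ⟨r, hr, by simp⟩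

lemma mem_atomsP_pos {P : LProgram α} {r : LPRule α} (hr : r ∈ P) {a : α}
    (ha : a ∈ r.pos) : a ∈ atomsP P :=
  Finset.mem_sup.2 ⟨r, hr, by simp [ha]⟩

lemma mem_atomsP_neg {P : LProgram α} {r : LPRule α} (hr : r ∈ P) {b : α}
    (hb : b ∈ r.neg) : b ∈ atomsP P :=
  Finset.mem_sup.2 ⟨r, hr, by simp [hb]⟩

lemma mem_MU {P : LProgram α} {U : Set (EncAtom α)} {q : α} :
    q ∈ MU P U ↔ q ∈ atomsP P ∧ EncAtom.c q ∈ U :=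
  Finset.mem_filter

/-- `F₁` reads `c⁻(q, j + 1)` as `ReachedBy U q j`, and `F₂` reads `c(q)` as
`ReachedBy U q (k + 1)`. -/
def ReachedBy (U : Set (EncAtom α)) (q : α) (j : ℕ) : Prop :=
  ∃ i, 1 ≤ i ∧ i ≤ j ∧ EncAtom.ci q i ∈ U

/-- The rule `r` fires in round `j + 1`. -/
def Applicable (U : Set (EncAtom α)) (r : LPRule α) (j : ℕ) : Prop :=
  (∀ a ∈ r.pos, ReachedBy U a j) ∧ ∀ b ∈ r.neg, EncAtom.c b ∉ U

def stage (P : LProgram α) (U : Set (EncAtom α)) (j : ℕ) : Finset α :=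
  (atomsP P).filter (ReachedBy U · j)

section ReachedBy

variable {β : Type} {U : Set (EncAtom β)} {q : β}

theorem ReachedBy.mono {i j : ℕ} (h : ReachedBy U q i) (hij : i ≤ j) : ReachedBy U q j :=
  let ⟨l, hl, hli, hq⟩ := h
  ⟨l, hl, hli.trans hij, hq⟩

theorem not_reachedBy_zero : ¬ReachedBy U q 0 :=
  fun ⟨_, h1, h0, _⟩ => by omega

theorem reachedBy_succ_iff {j : ℕ} :
    ReachedBy U q (j + 1) ↔ ReachedBy U q j ∨ EncAtom.ci q (j + 1) ∈ U := by
  constructor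
  · rintro ⟨i, h1, hi, hq⟩
    rcases hi.lt_or_eq with hi | rfl
    · exact Or.inl ⟨i, h1, by omega, hq⟩
    · exact Or.inr hq
  · rintro (h | h)
    · exact h.mono j.le_succ
    · exact ⟨j + 1, by omega, le_rfl, h⟩

end ReachedBy

theorem mem_stage {P : LProgram α} {U : Set (EncAtom α)} {q : α} {j : ℕ} :
    q ∈ stage P U j ↔ q ∈ atomsP P ∧ ReachedBy U q j :=
  Finset.mem_filter

theorem stage_mono {P : LProgram α} {U : Set (EncAtom α)} : Monotone (stage P U) :=
  fun _ _ hij => Finset.monotone_filter_right _ fun _ _ h => h.mono hij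

namespace ModelT0

variable {k : ℕ} {P : LProgram α} {U : Set (EncAtom α)} {r : LPRule α} {q : α} {j : ℕ}

theorem cm_mem_iff (hU : ModelT0 k P U) (hq : q ∈ atomsP P) (hj : 1 ≤ j) (hjk : j ≤ k) :
    EncAtom.cm q (j + 1) ∈ U ↔ ReachedBy U q j :=
  hU.1 q hq (j + 1) (by omega) (by omega)

theorem applicable_of_satF3 (hU : ModelT0 k P U) (hr : r ∈ P) (hjk : j ≤ k)
    (h : SatF3 U r (j + 1)) : Applicable U r j := by
  cases j with
  | zero =>
    rw [SatF3, if_pos rfl] at h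
    exact ⟨fun a ha => by simp [h.1] at ha, h.2⟩
  | succ n =>
    rw [SatF3, if_neg (by omega)] at h
    exact ⟨fun a ha => (hU.cm_mem_iff (mem_atomsP_pos hr ha) (by omega) hjk).1 (h.1 a ha),
      h.2.1⟩

theorem reachedBy_succ_of_applicable (hU : ModelT0 k P U) (hr : r ∈ P) (hjk : j ≤ k)
    (h : Applicable U r j) : ReachedBy U r.head (j + 1) := by
  by_cases hhead : ReachedBy U r.head j
  · exact hhead.mono j.le_succ
  have hF3 : SatF3 U r (j + 1) := by
    cases j with
    | zero =>
      rw [SatF3, if_pos rfl]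
      exact ⟨Finset.eq_empty_of_forall_notMem fun a ha => not_reachedBy_zero (h.1 a ha), h.2⟩
    | succ n =>
      rw [SatF3, if_neg (by omega)]
      refine ⟨fun a ha => (hU.cm_mem_iff (mem_atomsP_pos hr ha) (by omega) hjk).2 (h.1 a ha),
        h.2, fun hm => hhead ((hU.cm_mem_iff (mem_atomsP_head hr) (by omega) hjk).1 hm)⟩
  have hci :=
    (hU.2.2 r.head (mem_atomsP_head hr) (j + 1) (by omega) (by omega)).2 ⟨r, hr, rfl, hF3⟩
  exact reachedBy_succ_iff.2 (Or.inr hci)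

theorem reachedBy_succ_iff_applicable (hU : ModelT0 k P U) (hq : q ∈ atomsP P) (hjk : j ≤ k) :
    ReachedBy U q (j + 1) ↔ ReachedBy U q j ∨ ∃ r ∈ P, r.head = q ∧ Applicable U r j := by
  constructor
  · intro h
    rcases reachedBy_succ_iff.1 h with h | hci
    · exact Or.inl h
    · obtain ⟨r, hr, hhead, hF3⟩ := (hU.2.2 q hq (j + 1) (by omega) (by omega)).1 hci
      exact Or.inr ⟨r, hr, hhead, hU.applicable_of_satF3 hr hjk hF3⟩
  · rintro (h | ⟨r, hr, rfl, happ⟩)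
    · exact h.mono j.le_succ
    · exact hU.reachedBy_succ_of_applicable hr hjk happ

theorem reachedBy_mem_LM (hU : ModelT0 k P U) :
    ∀ j ≤ k + 1, ∀ q ∈ atomsP P, ReachedBy U q j → q ∈ LM (reduct P ↑(MU P U)) := by
  intro j
  induction j with
  | zero => exact fun _ _ _ h => (not_reachedBy_zero h).elim
  | succ j ih =>
    intro hj q hq h
    rcases (hU.reachedBy_succ_iff_applicable hq (by omega)).1 h with
      h | ⟨r, hr, rfl, hpos, hneg⟩
    · exact ih (by omega) q hq h
    · refine head_mem_LM (r := r.horn)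
        (horn_mem_reduct hr fun b hb hbM => hneg b hb (mem_MU.1 hbM).2) ?_
      exact fun a ha => ih (by omega) a (mem_atomsP_pos hr ha) (hpos a ha)

theorem MU_subset_LM (hU : ModelT0 k P U) : ↑(MU P U) ⊆ LM (reduct P ↑(MU P U)) := by
  intro q hq
  obtain ⟨hqA, hc⟩ := mem_MU.1 hq
  exact hU.reachedBy_mem_LM (k + 1) le_rfl q hqA ((hU.2.1 q hqA).1 hc)

theorem stage_succ_eq_MU (hU : ModelT0 k P U) : stage P U (k + 1) = MU P U :=
  Finset.filter_congr fun q hq => (hU.2.1 q hq).symm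

theorem stage_succ_succ_eq (hU : ModelT0 k P U) (hjk : j + 1 ≤ k)
    (h : stage P U j = stage P U (j + 1)) : stage P U (j + 1) = stage P U (j + 2) := by
  refine (stage_mono (j + 1).le_succ).antisymm fun q hq => ?_
  obtain ⟨hqA, hq⟩ := mem_stage.1 hq
  refine mem_stage.2 ⟨hqA, ?_⟩
  rcases (hU.reachedBy_succ_iff_applicable hqA hjk).1 hq with hq | ⟨r, hr, rfl, hpos, hneg⟩
  · exact hq
  · have hpos' : ∀ a ∈ r.pos, ReachedBy U a j := fun a ha =>
      (mem_stage.1 (h ▸ mem_stage.2 ⟨mem_atomsP_pos hr ha, hpos a ha⟩)).2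
    exact hU.reachedBy_succ_of_applicable hr (by omega) ⟨hpos', hneg⟩

theorem stage_eq_MU (hU : ModelT0 k P U) (hcard : (MU P U).card ≤ k) : stage P U k = MU P U := by
  obtain ⟨j, hjk, hj⟩ :=
    exists_eq_succ_of_card_le stage_mono (hU.stage_succ_eq_MU ▸ hcard)
  rw [← hU.stage_succ_eq_MU]
  exact eq_succ_of_eq_succ_of_le (fun n hn => hU.stage_succ_succ_eq hn) hjk hj

theorem LM_subset_MU (hU : ModelT0 k P U) (hk : stage P U k = MU P U) :
    LM (reduct P ↑(MU P U)) ⊆ ↑(MU P U) := by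
  refine LM_subset_of_closed ?_
  rintro _ ⟨r, ⟨hr, hneg⟩, rfl⟩ (hpos : (↑r.pos : Set α) ⊆ ↑(MU P U))
  have happ : Applicable U r k := by
    refine ⟨fun a ha => (mem_stage.1 (hk ▸ hpos ha : a ∈ stage P U k)).2,
      fun b hb hc => ?_⟩
    have : b ∈ (↑r.neg : Set α) ∩ ↑(MU P U) :=
      ⟨hb, mem_MU.2 ⟨mem_atomsP_neg hr hb, hc⟩⟩
    rwa [hneg] at this
  show r.head ∈ (↑(MU P U) : Set α)
  rw [Finset.mem_coe, ← hU.stage_succ_eq_MU]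
  exact mem_stage.2 ⟨mem_atomsP_head hr, hU.reachedBy_succ_of_applicable hr le_rfl happ⟩

end ModelT0

/-- if `U` is a model of `T₀(P)` with `|M(U)| ≤ k`, then `M(U)` is a
stable model of `P`. -/
theorem MU_stable (k : ℕ) (P : LProgram α) (U : Set (EncAtom α))
    (hU : ModelT0 k P U) (hcard : (MU P U).card ≤ k) :
    isStable P ↑(MU P U) := by
  have hsaturated : stage P U k = MU P U := hU.stage_eq_MU hcard
  exact hU.MU_subset_LM.antisymm (hU.LM_subset_MU hsaturated)
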